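/- The map φ ↦ 𝕀₂(φ), from endomorphisms of the free semigroup A_n⁺ to n+n² dimensional integer matrices, is an anti-homomorphism of monoids: 𝕀₂(ψ∘φ) = 𝕀₂(φ)·𝕀₂(ψ). Equivalently, F₁(ψ∘φ) = F₁(φ)F₁(ψ), T₂(ψ∘φ) = T₂(φ)T₂(ψ), and F₂(ψ∘φ) = F₁(φ)F₂(ψ) + F₂(φ)T₂(ψ). -/

import Mathlib

/-!
Counting factors is additive under concatenation, except that `u ++ v` has one extra
two-letter factor across the junction: (last letter of `u`)(first letter of `v`). Since
`ψ(φ(i))` is the concatenation of the `ψ(a)` over the letters `a` of `φ(i)`, its letters are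
counted by `F₁(φ)F₁(ψ)`; its two-letter factors are those inside some `ψ(a)`, counted by
`F₁(φ)F₂(ψ)`, plus one junction factor for each two-letter factor `ab` of `φ(i)`, counted by
`F₂(φ)T₂(ψ)`. Finally, `T₂(φ)` is the Kronecker product of the 0-1 matrices of the partial
maps `r ↦ last letter of φ(r)` and `s ↦ first letter of φ(s)`, and these maps compose under
substitution because `ψ` erases no letter.
-/

/-- `occ w u` is the number of occurrences of `w` as a (contiguous) factor
of `u`. -/
def occ {α : Type*} [DecidableEq α] (w u : List α) : ℕ :=
  u.tails.countP fun t => decide (w <+: t)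

/-- `F1 φ` is the incidence matrix of the substitution `φ`:
its (i,j)-entry counts occurrences of the letter j in φ(i). -/
def F1 {n : ℕ} (φ : Fin n → List (Fin n)) : Matrix (Fin n) (Fin n) ℤ :=
  Matrix.of fun i j => (occ [j] (φ i) : ℤ)

/-- `F2 φ` is the 2-frequency matrix: its (i,(j,k))-entry counts occurrences
of the two-letter word jk as a factor of φ(i). -/
def F2 {n : ℕ} (φ : Fin n → List (Fin n)) :
    Matrix (Fin n) (Fin n × Fin n) ℤ :=
  Matrix.of fun i p => (occ [p.1, p.2] (φ i) : ℤ)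

/-- `T2 φ` records concatenation junctions: its ((r,s),(t,u))-entry is 1 iff
t is the last letter of φ(r) and u is the first letter of φ(s). -/
def T2 {n : ℕ} (φ : Fin n → List (Fin n)) :
    Matrix (Fin n × Fin n) (Fin n × Fin n) ℤ :=
  Matrix.of fun p q =>
    if (φ p.1).getLast? = some q.1 ∧ (φ p.2).head? = some q.2 then 1 else 0

/-- The block matrix 𝕀₂(φ) = [[F₁(φ), F₂(φ)], [0, T₂(φ)]]. -/
def I2 {n : ℕ} (φ : Fin n → List (Fin n)) :
    Matrix (Fin n ⊕ Fin n × Fin n) (Fin n ⊕ Fin n × Fin n) ℤ :=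
  Matrix.fromBlocks (F1 φ) (F2 φ) 0 (T2 φ)

/-- Composition of substitutions: `compSubst ψ φ` corresponds to `ψ ∘ φ`. -/
def compSubst {n : ℕ} (ψ φ : Fin n → List (Fin n)) : Fin n → List (Fin n) :=
  fun i => ((φ i).map ψ).flatten

section Words

variable {α : Type*} [DecidableEq α]

theorem occ_cons (w : List α) (a : α) (u : List α) :
    occ w (a :: u) = occ w u + if w <+: a :: u then 1 else 0 := by
  simp [occ, List.countP_cons]

theorem occ_singleton_eq_count (a : α) (u : List α) : occ [a] u = u.count a := by
  induction u with
  | nil => simp [occ]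
  | cons b u ih => simp [occ_cons, ih, List.count_cons, @eq_comm _ a b]

theorem occ_pair_cons (a b c : α) (u : List α) :
    occ [a, b] (c :: u) = occ [a, b] u + if c = a ∧ u.head? = some b then 1 else 0 := by
  rw [occ_cons]
  cases u <;> simp [eq_comm]

theorem occ_pair_eq_count_zip (a b : α) (u : List α) :
    occ [a, b] u = (u.zip u.tail).count (a, b) := by
  induction u with
  | nil => simp [occ]
  | cons c u ih =>
    rw [occ_pair_cons, ih]
    cases u <;> simp [List.count_cons]

theorem occ_pair_append (a b : α) (u v : List α) :
    occ [a, b] (u ++ v) = occ [a, b] u + occ [a, b] v +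
      if u.getLast? = some a ∧ v.head? = some b then 1 else 0 := by
  induction u with
  | nil => simp [occ]
  | cons c u ih =>
    rw [List.cons_append, occ_pair_cons, ih, occ_pair_cons]
    cases u with
    | nil => simp [occ]
    | cons d u => simp; omega

end Words

section Flatten

variable {α β : Type*} (ψ : α → List β)

theorem head?_flatten_map_of_ne_nil (hψ : ∀ a, ψ a ≠ []) (l : List α) :
    (l.map ψ).flatten.head? = l.head?.bind fun a => (ψ a).head? := by
  cases l with
  | nil => rfl
  | cons a l =>
    obtain ⟨b, u, hb⟩ := List.exists_cons_of_ne_nil (hψ a)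
    simp [hb]

theorem getLast?_flatten_map_of_ne_nil (hψ : ∀ a, ψ a ≠ []) (l : List α) :
    (l.map ψ).flatten.getLast? = l.getLast?.bind fun a => (ψ a).getLast? := by
  have h := head?_flatten_map_of_ne_nil (fun a => (ψ a).reverse) (by simpa using hψ) l.reverse
  simp only [← List.head?_reverse, List.reverse_flatten, List.map_map, ← List.map_reverse]
  exact h

theorem occ_pair_flatten_map [DecidableEq β] (hψ : ∀ a, ψ a ≠ []) (a b : β) (l : List α) :
    occ [a, b] (l.map ψ).flatten = (l.map fun x => occ [a, b] (ψ x)).sum +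
      ((l.zip l.tail).map fun p =>
        if (ψ p.1).getLast? = some a ∧ (ψ p.2).head? = some b then 1 else 0).sum := by
  induction l with
  | nil => simp [occ]
  | cons c l ih =>
    rw [List.map_cons, List.flatten_cons, occ_pair_append, ih,
      head?_flatten_map_of_ne_nil ψ hψ]
    cases l with
    | nil => simp
    | cons d l =>
      simp only [List.zip_cons_cons, List.tail_cons, List.map_cons, List.sum_cons,
        List.head?_cons, Option.bind_some]
      grind

end Flatten

theorem List.sum_map_eq_sum_count_mul {ι R : Type*} [Fintype ι] [DecidableEq ι]
    [NonAssocSemiring R] (l : List ι) (f : ι → R) :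
    (l.map f).sum = ∑ x, (l.count x : R) * f x := by
  rw [Finset.sum_list_map_count]
  simp_rw [nsmul_eq_mul]
  refine Finset.sum_subset (Finset.subset_univ _) fun x _ hx => ?_
  rw [List.count_eq_zero_of_not_mem (by simpa using hx), Nat.cast_zero, zero_mul]

section PartialFunMatrix

variable {ι κ μ : Type*} [DecidableEq κ]

def partialFunMatrix (R : Type*) [Semiring R] (f : ι → Option κ) : Matrix ι κ R :=
  Matrix.of fun i k => if f i = some k then 1 else 0

theorem partialFunMatrix_mul (R : Type*) [Semiring R] [Fintype κ] [DecidableEq μ]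
    (f : ι → Option κ) (g : κ → Option μ) :
    partialFunMatrix R f * partialFunMatrix R g = partialFunMatrix R fun i => (f i).bind g := by
  ext i m
  simp only [partialFunMatrix, Matrix.mul_apply, Matrix.of_apply]
  have key : ∀ o : Option κ, ∑ k, (if o = some k then (1 : R) else 0) *
      (if g k = some m then 1 else 0) = if o.bind g = some m then 1 else 0 := by
    rintro (_ | k)
    · simp
    · simp only [Option.some.injEq, Option.bind_some, boole_mul]
      exact Finset.sum_ite_eq _ _ _ |>.trans (if_pos (Finset.mem_univ k))
  exact key (f i)

end PartialFunMatrix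

section Substitution

open scoped Kronecker

variable {n : ℕ}

theorem T2_eq_kronecker (φ : Fin n → List (Fin n)) :
    T2 φ = partialFunMatrix ℤ (fun i => (φ i).getLast?) ⊗ₖ
      partialFunMatrix ℤ fun i => (φ i).head? := by
  ext ⟨r, s⟩ ⟨t, u⟩
  simp only [T2, partialFunMatrix, Matrix.kronecker_apply, Matrix.of_apply, ite_zero_mul_ite_zero,
    mul_one]

theorem F1_compSubst (φ ψ : Fin n → List (Fin n)) :
    F1 (compSubst ψ φ) = F1 φ * F1 ψ := by
  ext i j
  simp only [F1, compSubst, Matrix.mul_apply, Matrix.of_apply, occ_singleton_eq_count,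
    List.count_flatten, List.map_map, Nat.cast_list_sum]
  exact List.sum_map_eq_sum_count_mul _ _

theorem T2_compSubst (φ ψ : Fin n → List (Fin n)) (hψ : ∀ i, ψ i ≠ []) :
    T2 (compSubst ψ φ) = T2 φ * T2 ψ := by
  simp only [T2_eq_kronecker, ← Matrix.mul_kronecker_mul, partialFunMatrix_mul, compSubst,
    getLast?_flatten_map_of_ne_nil ψ hψ, head?_flatten_map_of_ne_nil ψ hψ]

theorem F2_compSubst (φ ψ : Fin n → List (Fin n)) (hψ : ∀ i, ψ i ≠ []) :
    F2 (compSubst ψ φ) = F1 φ * F2 ψ + F2 φ * T2 ψ := by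
  ext i ⟨a, b⟩
  simp only [F1, F2, T2, compSubst, Matrix.add_apply, Matrix.mul_apply, Matrix.of_apply,
    occ_pair_flatten_map ψ hψ, occ_singleton_eq_count, occ_pair_eq_count_zip, Nat.cast_add,
    Nat.cast_list_sum, List.map_map]
  rw [List.sum_map_eq_sum_count_mul (φ i), List.sum_map_eq_sum_count_mul ((φ i).zip (φ i).tail)]
  simp only [Function.comp_apply, Nat.cast_ite, Nat.cast_one, Nat.cast_zero, Prod.mk.eta]
  -- the two sides count pairs through different `BEq` instances on `Fin n × Fin n`
  simp only [List.count_eq_countP, Bool.beq_eq_decide_eq]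

end Substitution

theorem stmt_11 {n : ℕ} (φ ψ : Fin n → List (Fin n))
    (hψ : ∀ i, ψ i ≠ []) :
    I2 (compSubst ψ φ) = I2 φ * I2 ψ ∧
    F1 (compSubst ψ φ) = F1 φ * F1 ψ ∧
    T2 (compSubst ψ φ) = T2 φ * T2 ψ ∧
    F2 (compSubst ψ φ) = F1 φ * F2 ψ + F2 φ * T2 ψ := by
  refine ⟨?_, F1_compSubst φ ψ, T2_compSubst φ ψ hψ, F2_compSubst φ ψ hψ⟩
  rw [I2, I2, I2, Matrix.fromBlocks_multiply, F1_compSubst, T2_compSubst φ ψ hψ,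
    F2_compSubst φ ψ hψ]
  simp
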